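/- For any integer k ≥ 1, the Shannon entropy (base 2) of the Binomial(k,1/2) distribution is at least (1/2)·log₂(k+1). -/

import Mathlib

/-! Entropy dominates min-entropy, `H(p) ≥ -log₂ maxₓ p(x)`, and the largest binomial
probability satisfies `C(k, ⌊k/2⌋)² · (k + 1) ≤ 4ᵏ`, so `-log₂ (C(k, ⌊k/2⌋) / 2ᵏ) ≥ ½ log₂ (k + 1)`.
The latter is proved for even `k = 2n` by induction on `n` through
`(n + 1) C(2n + 2, n + 1) = 2 (2n + 1) C(2n, n)`; the odd case follows from
`C(2n + 2, n + 1) = 2 C(2n + 1, n)`. -/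

open Real Finset

/-- Base-2 Shannon entropy of the Binomial(k, 1/2) distribution. -/
noncomputable def binHalfEntropy (k : ℕ) : ℝ :=
  -∑ x ∈ Finset.range (k + 1),
      ((k.choose x : ℝ) / 2 ^ k) * Real.logb 2 ((k.choose x : ℝ) / 2 ^ k)

namespace Nat

theorem two_mul_add_one_mul_centralBinom_sq_le (n : ℕ) :
    (2 * n + 1) * centralBinom n ^ 2 ≤ 16 ^ n := by
  induction n with
  | zero => simp
  | succ n ih =>
    have hrec := succ_mul_centralBinom_succ n
    refine Nat.le_of_mul_le_mul_left (c := (n + 1) ^ 2) ?_ (by positivity)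
    calc (n + 1) ^ 2 * ((2 * (n + 1) + 1) * centralBinom (n + 1) ^ 2)
        = (2 * n + 3) * ((n + 1) * centralBinom (n + 1)) ^ 2 := by ring
      _ = (2 * n + 3) * (4 * (2 * n + 1)) * ((2 * n + 1) * centralBinom n ^ 2) := by
          rw [hrec]; ring
      _ ≤ (2 * n + 3) * (4 * (2 * n + 1)) * 16 ^ n := Nat.mul_le_mul_left _ ih
      _ ≤ 16 * (n + 1) ^ 2 * 16 ^ n := Nat.mul_le_mul_right _ (by nlinarith)
      _ = (n + 1) ^ 2 * 16 ^ (n + 1) := by ring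

theorem succ_mul_choose_half_sq_le_four_pow (k : ℕ) :
    (k + 1) * k.choose (k / 2) ^ 2 ≤ 4 ^ k := by
  rcases Nat.even_or_odd' k with ⟨n, rfl | rfl⟩
  · rw [Nat.mul_div_cancel_left _ two_pos, pow_mul]
    exact two_mul_add_one_mul_centralBinom_sq_le n
  · have hhalf : (2 * n + 1) / 2 = n := by omega
    have hcentral : centralBinom (n + 1) = 2 * (2 * n + 1).choose n := by
      rw [centralBinom, show 2 * (n + 1) = 2 * n + 1 + 1 by ring, choose_succ_succ,
        choose_symm_half]
      ring
    have h := two_mul_add_one_mul_centralBinom_sq_le (n + 1)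
    rw [hcentral] at h
    rw [hhalf]
    refine Nat.le_of_mul_le_mul_right (c := 4) ?_ (by norm_num)
    calc (2 * n + 1 + 1) * (2 * n + 1).choose n ^ 2 * 4
        ≤ (2 * (n + 1) + 1) * (2 * (2 * n + 1).choose n) ^ 2 := by nlinarith
      _ ≤ 16 ^ (n + 1) := h
      _ = 4 ^ (2 * n + 1) * 4 := by rw [show (16 : ℕ) = 4 ^ 2 by norm_num, ← pow_mul]; ring

end Nat

theorem neg_logb_le_neg_sum_mul_logb {ι : Type*} {s : Finset ι} {p : ι → ℝ} {b M : ℝ}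
    (hb : 1 < b) (hp : ∀ i ∈ s, 0 ≤ p i) (hsum : ∑ i ∈ s, p i = 1) (hM : ∀ i ∈ s, p i ≤ M) :
    -logb b M ≤ -∑ i ∈ s, p i * logb b (p i) := by
  suffices ∑ i ∈ s, p i * logb b (p i) ≤ ∑ i ∈ s, p i * logb b M by
    rw [← Finset.sum_mul, hsum, one_mul] at this
    linarith
  refine Finset.sum_le_sum fun i hi => ?_
  rcases (hp i hi).eq_or_lt with h0 | hpos
  · simp [← h0]
  · exact mul_le_mul_of_nonneg_left (logb_le_logb_of_le hb hpos (hM i hi)) hpos.le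

theorem neg_logb_choose_half_div_le_binHalfEntropy (k : ℕ) :
    -logb 2 ((k.choose (k / 2) : ℝ) / 2 ^ k) ≤ binHalfEntropy k := by
  refine neg_logb_le_neg_sum_mul_logb one_lt_two (fun x _ => by positivity) ?_ fun x _ => ?_
  · rw [← Finset.sum_div, div_eq_one_iff_eq (by positivity)]
    exact_mod_cast Nat.sum_range_choose k
  · gcongr
    exact_mod_cast Nat.choose_le_middle x k

theorem half_logb_succ_le_neg_logb_choose_half_div (k : ℕ) :
    (1 / 2) * logb 2 (k + 1) ≤ -logb 2 ((k.choose (k / 2) : ℝ) / 2 ^ k) := by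
  have hchoose : (0 : ℝ) < k.choose (k / 2) := by
    exact_mod_cast Nat.choose_pos (Nat.div_le_self k 2)
  have hsq : (k + 1 : ℝ) ≤ ((2 : ℝ) ^ k / k.choose (k / 2)) ^ 2 := by
    rw [div_pow, le_div_iff₀ (by positivity), ← pow_mul, mul_comm k, pow_mul,
      show (2 : ℝ) ^ 2 = 4 by norm_num]
    exact_mod_cast Nat.succ_mul_choose_half_sq_le_four_pow k
  calc (1 / 2) * logb 2 (k + 1)
      ≤ (1 / 2) * logb 2 (((2 : ℝ) ^ k / k.choose (k / 2)) ^ 2) := by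
        gcongr; norm_num
    _ = -logb 2 ((k.choose (k / 2) : ℝ) / 2 ^ k) := by
        rw [logb_pow, ← logb_inv, inv_div]
        ring

theorem binHalfEntropy_ge_half_logb_succ_general (k : ℕ) :
    binHalfEntropy k ≥ (1 / 2) * Real.logb 2 (k + 1) :=
  (half_logb_succ_le_neg_logb_choose_half_div k).trans
    (neg_logb_choose_half_div_le_binHalfEntropy k)

theorem binHalfEntropy_ge_half_logb_succ (k : ℕ) (hk : 1 ≤ k) :
    binHalfEntropy k ≥ (1 / 2) * Real.logb 2 (k + 1) :=
  binHalfEntropy_ge_half_logb_succ_general k
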